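/- Let L be the set of points y where a cone-like minimizing cluster 𝓔 in ℝ^N attains its maximal density: L = { y : Θ_y(𝓔) = Θ₀(𝓔) }. Assume the following two properties (standard consequences of the monotonicity formula): (i) Θ_y(𝓔) ≤ Θ₀(𝓔) for all y, and (ii) if Θ_y(𝓔) = Θ₀(𝓔) then 𝓔 is invariant under translation by y (𝓔(i) + y = 𝓔(i) for all i). Then L is a linear subspace of ℝ^N and 𝓔 = 𝓔' × L for a cone-like cluster 𝓔' in the orthogonal complement of L. -/

import Mathlib

/-!
Translating a test vector field translates the perimeter, so `Θ` is invariant under every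
translation preserving all chambers; together with (ii) this identifies `L` with the common
stabilizer of the chambers under translations. That stabilizer is an additive subgroup, and
since the chambers are cones it is closed under positive dilations, hence a linear subspace.
Decomposing `x = q + p` along `L ⊕ Lᗮ` and translating by `-q` then shows that each chamber is
`(chamber ∩ Lᗮ) + L`.
-/

open MeasureTheory Metric Set Filter Pointwise

/-- `ℝ^N` as a Euclidean space. -/
abbrev Euc (N : ℕ) := EuclideanSpace ℝ (Fin N)

/-- The divergence of a vector field, as the trace of its Fréchet derivative. -/
noncomputable def divg {N : ℕ} (X : Euc N → Euc N) (x : Euc N) : ℝ :=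
  LinearMap.trace ℝ (Euc N) (fderiv ℝ X x).toLinearMap

/-- De Giorgi's relative perimeter of a set `E` in an open set `A`. -/
noncomputable def per {N : ℕ} (E A : Set (Euc N)) : ℝ :=
  sSup {c : ℝ | ∃ X : Euc N → Euc N, ContDiff ℝ 1 X ∧ (∀ x, ‖X x‖ ≤ 1) ∧
    IsCompact (tsupport X) ∧ tsupport X ⊆ A ∧ c = ∫ x in E, divg X x}

/-- The relative perimeter of a cluster: half the sum of the chamber perimeters. -/
noncomputable def clPer {N m : ℕ} (E : Fin m → Set (Euc N)) (A : Set (Euc N)) : ℝ :=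
  (∑ i, per (E i) A) / 2

/-- The volume of the unit ball in `ℝ^N`. -/
noncomputable def unitBallVol (N : ℕ) : ℝ :=
  (volume (ball (0 : Euc N) 1)).toReal

section TranslationsAndCones

variable {V : Type*} [AddCommGroup V]

lemma Set.image_add_right_eq_vadd (y : V) (s : Set V) : (fun x => x + y) '' s = y +ᵥ s := by
  simp_rw [add_comm _ y]
  rfl

lemma Set.preimage_add_neg_eq_vadd (y : V) (s : Set V) : (fun x => x + -y) ⁻¹' s = y +ᵥ s := by
  rw [← Set.image_add_right, Set.image_add_right_eq_vadd]

variable [Module ℝ V]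

lemma Set.smul_vadd_smul_set (t : ℝ) (y : V) (s : Set V) : t • y +ᵥ t • s = t • (y +ᵥ s) := by
  simp only [← Set.image_smul, ← Set.image_vadd, Set.image_image, vadd_eq_add, smul_add]

lemma Submodule.smul_coe_of_ne_zero (S : Submodule ℝ V) {t : ℝ} (ht : t ≠ 0) :
    t • (S : Set V) = S :=
  (Set.smul_set_subset_iff.2 fun _ h => S.smul_mem t h).antisymm
    ((Set.subset_smul_set_iff₀ ht).2 <| Set.smul_set_subset_iff.2 fun _ h => S.smul_mem _ h)

lemma AddSubgroup.smul_mem_of_forall_pos_smul_mem (H : AddSubgroup V)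
    (hpos : ∀ t : ℝ, 0 < t → ∀ y ∈ H, t • y ∈ H) (t : ℝ) {y : V} (hy : y ∈ H) : t • y ∈ H := by
  rcases lt_trichotomy t 0 with ht | rfl | ht
  · simpa using H.neg_mem (hpos (-t) (neg_pos.2 ht) y hy)
  · simp
  · exact hpos t ht y hy

lemma smul_mem_stabilizer_of_pos {C : Set V} (hC : ∀ t : ℝ, 0 < t → t • C = C)
    {t : ℝ} (ht : 0 < t) {y : V} (hy : y ∈ AddAction.stabilizer V C) :
    t • y ∈ AddAction.stabilizer V C := by
  rw [AddAction.mem_stabilizer_iff] at hy ⊢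
  rw [← hC t ht, Set.smul_vadd_smul_set, hy]

def translationStabilizer {ι : Type*} (E : ι → Set V)
    (hcone : ∀ i, ∀ t : ℝ, 0 < t → t • E i = E i) : Submodule ℝ V :=
  { ⨅ i, AddAction.stabilizer V (E i) with
    smul_mem' := fun t _ hy => AddSubgroup.smul_mem_of_forall_pos_smul_mem _
      (fun _ ht _ hy => AddSubgroup.mem_iInf.2 fun i =>
        smul_mem_stabilizer_of_pos (hcone i) ht (AddSubgroup.mem_iInf.1 hy i)) t hy }

lemma mem_translationStabilizer {ι : Type*} {E : ι → Set V}
    {hcone : ∀ i, ∀ t : ℝ, 0 < t → t • E i = E i} {y : V} :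
    y ∈ translationStabilizer E hcone ↔ ∀ i, y +ᵥ E i = E i :=
  AddSubgroup.mem_iInf

end TranslationsAndCones

lemma Submodule.eq_inter_orthogonal_add {F : Type*} [NormedAddCommGroup F]
    [InnerProductSpace ℝ F] (S : Submodule ℝ F) [S.HasOrthogonalProjection] {A : Set F}
    (hA : ∀ y ∈ S, y +ᵥ A = A) : A = (A ∩ Sᗮ) + S := by
  refine subset_antisymm (fun x hx => ?_) ?_
  · obtain ⟨q, hq, p, hp, rfl⟩ := S.exists_add_mem_mem_orthogonal x
    have hpA : p ∈ A := by
      rw [← hA (-q) (S.neg_mem hq)]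
      exact ⟨q + p, hx, by simp⟩
    exact ⟨p, ⟨hpA, hp⟩, q, hq, add_comm p q⟩
  · rintro _ ⟨p, ⟨hp, -⟩, q, hq, rfl⟩
    rw [← hA q hq]
    exact ⟨p, hp, add_comm q p⟩

section Density

variable {N : ℕ}

lemma divg_comp_add_right (X : Euc N → Euc N) (y x : Euc N) :
    divg (fun x => X (x + y)) x = divg X (x + y) := by
  rw [divg, divg, fderiv_comp_add_right]

lemma exists_test_field_vadd {E A : Set (Euc N)} {c : ℝ} (y : Euc N)
    (hc : ∃ X : Euc N → Euc N, ContDiff ℝ 1 X ∧ (∀ x, ‖X x‖ ≤ 1) ∧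
      IsCompact (tsupport X) ∧ tsupport X ⊆ A ∧ c = ∫ x in E, divg X x) :
    ∃ X : Euc N → Euc N, ContDiff ℝ 1 X ∧ (∀ x, ‖X x‖ ≤ 1) ∧
      IsCompact (tsupport X) ∧ tsupport X ⊆ y +ᵥ A ∧ c = ∫ x in y +ᵥ E, divg X x := by
  obtain ⟨X, hX, hX1, hXc, hXA, rfl⟩ := hc
  have hsupp : tsupport (fun x => X (x + -y)) = y +ᵥ tsupport X := by
    rw [← Set.preimage_add_neg_eq_vadd]
    exact tsupport_comp_eq_preimage X (Homeomorph.addRight (-y))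
  refine ⟨fun x => X (x + -y), hX.comp (contDiff_id.add contDiff_const), fun _ => hX1 _,
    ?_, ?_, ?_⟩
  · rw [hsupp]
    exact hXc.vadd y
  · rw [hsupp]
    exact Set.vadd_set_mono hXA
  · simp_rw [divg_comp_add_right, ← Set.preimage_add_neg_eq_vadd]
    exact ((measurePreserving_add_right volume (-y)).setIntegral_preimage_emb
      (measurableEmbedding_addRight (-y)) (divg X) E).symm

lemma per_vadd (y : Euc N) (E A : Set (Euc N)) : per (y +ᵥ E) (y +ᵥ A) = per E A := by
  unfold per
  congr 1
  ext c
  refine ⟨fun hc => ?_, exists_test_field_vadd y⟩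
  simpa only [neg_vadd_vadd, Set.mem_ofPred_eq] using exists_test_field_vadd (-y) hc

/-- `P(𝓔; B_r(y)) / (ω_{N-1} r^{N-1})`, whose limit as `r → 0⁺` is `Θ_y(𝓔)`. -/
noncomputable def densityRatio {m : ℕ} (E : Fin m → Set (Euc N)) (y : Euc N) (r : ℝ) : ℝ :=
  clPer E (ball y r) / (unitBallVol (N - 1) * r ^ (N - 1))

lemma densityRatio_vadd {m : ℕ} (E : Fin m → Set (Euc N)) (y x : Euc N) :
    densityRatio (fun i => y +ᵥ E i) (y + x) = densityRatio E x := by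
  ext r
  simp only [densityRatio, clPer, ← vadd_eq_add, ← vadd_ball, per_vadd]

lemma density_add_eq_of_translation_invariant {m : ℕ} {E : Fin m → Set (Euc N)}
    {Θ : Euc N → ℝ} (hΘ : ∀ y, Tendsto (densityRatio E y) (nhdsWithin 0 (Ioi 0)) (nhds (Θ y)))
    {y : Euc N} (hy : ∀ i, y +ᵥ E i = E i) (x : Euc N) : Θ (y + x) = Θ x := by
  have hratio := densityRatio_vadd E y x
  simp only [hy] at hratio
  exact tendsto_nhds_unique (hratio ▸ hΘ (y + x)) (hΘ x)

end Density

theorem maximal_density_points_form_subspace_and_split_general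
    (N m : ℕ) (E : Fin m → Set (Euc N))
    (hcone : ∀ i, ∀ t : ℝ, 0 < t → t • E i = E i)
    (Θ : Euc N → ℝ)
    (hΘ : ∀ y : Euc N, Tendsto
      (fun r : ℝ => clPer E (ball y r) / (unitBallVol (N - 1) * r ^ (N - 1)))
      (nhdsWithin 0 (Ioi 0)) (nhds (Θ y)))
    (hinv : ∀ y : Euc N, Θ y = Θ 0 → ∀ i, (fun x => x + y) '' E i = E i) :
    ∃ S : Submodule ℝ (Euc N),
      (S : Set (Euc N)) = {y : Euc N | Θ y = Θ 0} ∧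
      (∀ i, E i = (E i ∩ (Sᗮ : Set (Euc N))) + (S : Set (Euc N))) ∧
      (∀ i, ∀ t : ℝ, 0 < t →
        t • (E i ∩ (Sᗮ : Set (Euc N))) = E i ∩ (Sᗮ : Set (Euc N))) := by
  set S := translationStabilizer E hcone
  have hS : (S : Set (Euc N)) = {y | Θ y = Θ 0} := by
    ext y
    refine ⟨fun hy => ?_, fun hy => mem_translationStabilizer.2 fun i => ?_⟩
    · simpa using density_add_eq_of_translation_invariant hΘ (mem_translationStabilizer.1 hy) 0
    · rw [← Set.image_add_right_eq_vadd]
      exact hinv y hy i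
  refine ⟨S, hS, fun i => S.eq_inter_orthogonal_add fun y hy => mem_translationStabilizer.1 hy i,
    fun i t ht => ?_⟩
  rw [Set.smul_set_inter₀ ht.ne', hcone i t ht, Sᗮ.smul_coe_of_ne_zero ht.ne']

/-- The set `L = {y : Θ_y(𝓔) = Θ₀(𝓔)}` of maximal-density points of a cone-like minimizing
cluster is a linear subspace, and `𝓔 = 𝓔' × L` for a cone-like cluster `𝓔'` in the
orthogonal complement of `L`. -/
theorem maximal_density_points_form_subspace_and_split
    (N m : ℕ) (E : Fin m → Set (Euc N))
    (hopen : ∀ i, IsOpen (E i))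
    (hcone : ∀ i, ∀ t : ℝ, 0 < t → t • E i = E i)
    (hdisj : ∀ i j, i ≠ j → volume (E i ∩ E j) = 0)
    (Θ : Euc N → ℝ)
    (hΘ : ∀ y : Euc N, Tendsto
      (fun r : ℝ => clPer E (ball y r) / (unitBallVol (N - 1) * r ^ (N - 1)))
      (nhdsWithin 0 (Ioi 0)) (nhds (Θ y)))
    (hmax : ∀ y : Euc N, Θ y ≤ Θ 0)
    (hinv : ∀ y : Euc N, Θ y = Θ 0 → ∀ i, (fun x => x + y) '' E i = E i) :
    ∃ S : Submodule ℝ (Euc N),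
      (S : Set (Euc N)) = {y : Euc N | Θ y = Θ 0} ∧
      (∀ i, E i = (E i ∩ (Sᗮ : Set (Euc N))) + (S : Set (Euc N))) ∧
      (∀ i, ∀ t : ℝ, 0 < t →
        t • (E i ∩ (Sᗮ : Set (Euc N))) = E i ∩ (Sᗮ : Set (Euc N))) :=
  maximal_density_points_form_subspace_and_split_general N m E hcone Θ hΘ hinv
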